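/- Let (Ω, 𝔽, ℙ) be a probability space, let B be a normed real vector space, let X : Ω → B be a strongly measurable random variable, let q > 0, and let K > 0 be a constant such that E‖X‖^{2q} < ∞ and ( E‖X‖^{2q} )^{1/2} ≤ K · E‖X‖^{q}. If there exists R > 0 such that ℙ( ‖X‖ > R ) ≤ 1/(4K²), then E‖X‖^{q} ≤ 2 R^{q}. -/

import Mathlib

/-!
Put `f = ‖X‖^q` and `A = {‖X‖ > R}`. On `Aᶜ` we have `f ≤ R^q`, while on `A` Cauchy–Schwarz and the
reverse Hölder inequality give `∫_A f ≤ (E f²)^{1/2} ℙ(A)^{1/2} ≤ K E f · 1/(2K) = E f / 2`.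
Hence `E f ≤ E f / 2 + R^q`.
-/

open MeasureTheory

section

variable {α : Type*} [MeasurableSpace α] {μ : Measure α} {f : α → ℝ} {s : Set α}

theorem setIntegral_le_sqrt_integral_sq_mul_sqrt_measureReal (hf₀ : 0 ≤ᵐ[μ] f) (hf : MemLp f 2 μ)
    (hs : μ s ≠ ⊤) : ∫ x in s, f x ∂μ ≤ √(∫ x, f x ^ 2 ∂μ) * √(μ.real s) := by
  have : IsFiniteMeasure (μ.restrict s) := isFiniteMeasure_restrict.mpr hs
  have cauchySchwarz := integral_mul_le_Lp_mul_Lq_of_nonneg (μ := μ.restrict s)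
    Real.HolderConjugate.two_two (ae_restrict_of_ae hf₀) (ae_of_all _ fun _ => zero_le_one)
    (by simpa using hf.restrict s) (memLp_const (1 : ℝ))
  simp only [mul_one, one_pow, integral_const, smul_eq_mul, Real.rpow_two,
    ← Real.sqrt_eq_rpow, measureReal_restrict_apply_univ] at cauchySchwarz
  refine cauchySchwarz.trans (mul_le_mul_of_nonneg_right (Real.sqrt_le_sqrt ?_) (Real.sqrt_nonneg _))
  exact setIntegral_le_integral hf.integrable_sq (ae_of_all _ fun x => sq_nonneg (f x))

theorem integral_le_two_mul_of_sqrt_integral_sq_le [IsProbabilityMeasure μ] {K t : ℝ}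
    (hf₀ : 0 ≤ᵐ[μ] f) (hf : MemLp f 2 μ) (hK : 0 < K)
    (hrev : √(∫ x, f x ^ 2 ∂μ) ≤ K * ∫ x, f x ∂μ)
    (hs : MeasurableSet s) (hμs : μ.real s ≤ 1 / (4 * K ^ 2))
    (hbound : ∀ x ∉ s, f x ≤ t) (ht : 0 ≤ t) :
    ∫ x, f x ∂μ ≤ 2 * t := by
  have hint : Integrable f μ := hf.integrable one_le_two
  have hsqrt : √(μ.real s) ≤ 1 / (2 * K) :=
    Real.sqrt_le_iff.mpr ⟨by positivity, hμs.trans_eq (by ring)⟩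
  have hon : ∫ x in s, f x ∂μ ≤ (∫ x, f x ∂μ) / 2 :=
    calc ∫ x in s, f x ∂μ ≤ √(∫ x, f x ^ 2 ∂μ) * √(μ.real s) :=
          setIntegral_le_sqrt_integral_sq_mul_sqrt_measureReal hf₀ hf (measure_ne_top μ s)
      _ ≤ (K * ∫ x, f x ∂μ) * (1 / (2 * K)) :=
          mul_le_mul hrev hsqrt (Real.sqrt_nonneg _) ((Real.sqrt_nonneg _).trans hrev)
      _ = (∫ x, f x ∂μ) / 2 := by field_simp
  have hoff : ∫ x in sᶜ, f x ∂μ ≤ t :=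
    calc ∫ x in sᶜ, f x ∂μ ≤ ∫ _ in sᶜ, t ∂μ :=
          setIntegral_mono_on hint.integrableOn (integrableOn_const (measure_ne_top μ _)) hs.compl
            hbound
      _ = μ.real sᶜ * t := by rw [setIntegral_const, smul_eq_mul]
      _ ≤ t := mul_le_of_le_one_left ht measureReal_le_one
  linarith [integral_add_compl hs hint]

end

/-- If a Banach-space-valued random variable satisfies a reverse-Hölder
moment comparison `(E‖X‖^{2q})^{1/2} ≤ K·E‖X‖^q` and `ℙ(‖X‖ > R) ≤ 1/(4K²)` for some
`R > 0`, then `E‖X‖^q ≤ 2R^q`. -/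
theorem moment_bound_of_small_tail
    {Ω B : Type*} [MeasurableSpace Ω] (μ : Measure Ω) [IsProbabilityMeasure μ]
    [NormedAddCommGroup B] [NormedSpace ℝ B]
    (X : Ω → B) (hX : StronglyMeasurable X)
    (q : ℝ) (hq : 0 < q) (K : ℝ) (hK : 0 < K)
    (hmom : Integrable (fun ω => ‖X ω‖ ^ (2 * q)) μ)
    (hrev : (∫ ω, ‖X ω‖ ^ (2 * q) ∂μ) ^ ((1 : ℝ) / 2) ≤ K * ∫ ω, ‖X ω‖ ^ q ∂μ)
    (R : ℝ) (hR : 0 < R)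
    (htail : μ {ω | R < ‖X ω‖} ≤ ENNReal.ofReal (1 / (4 * K ^ 2))) :
    ∫ ω, ‖X ω‖ ^ q ∂μ ≤ 2 * R ^ q := by
  have hnorm : Measurable fun ω => ‖X ω‖ := hX.norm.measurable
  have hsq : ∀ ω, ‖X ω‖ ^ (2 * q) = (‖X ω‖ ^ q) ^ 2 := fun ω => by
    rw [mul_comm, ← Real.rpow_mul_natCast (norm_nonneg _)]; norm_num
  simp only [hsq] at hmom hrev
  refine integral_le_two_mul_of_sqrt_integral_sq_le
    (ae_of_all _ fun ω => Real.rpow_nonneg (norm_nonneg _) q)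
    ((memLp_two_iff_integrable_sq (hnorm.pow_const q).aestronglyMeasurable).mpr hmom) hK
    (by rwa [Real.sqrt_eq_rpow]) (measurableSet_lt measurable_const hnorm)
    (ENNReal.toReal_le_of_le_ofReal (by positivity) htail)
    (fun ω hω => Real.rpow_le_rpow (norm_nonneg _) (not_lt.mp hω) hq.le) (by positivity)
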